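/- arXiv:2307.14628 — 3 statements merged into one kernel-verified Lean document; each statement's English description precedes it below -/
import Mathlib

section
/- Equivalently in measure-theoretic form: for a, b, m ∈ ℝ and v, t > 0, the Gaussian mixture measure obtained by binding the Gaussian measure N(m, t) with the kernel μ ↦ N(aμ + b, v) equals the Gaussian measure N(am + b, v + a² t); that is, (gaussianReal m t).bind (fun μ => gaussianReal (a*μ + b) v) = gaussianReal (a*m + b) (v + a²*t). -/
/-!
Write `N(c, v)` for `gaussianReal c v`. The kernel `μ ↦ N(aμ + b, v)` is the kernel
`c ↦ N(0, v)` translated by `c`, precomposed with the affine map `μ ↦ aμ + b`. Binding a measure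
with a translation kernel is convolution, so the mixture is the image `N(am + b, a²t)` of
`N(m, t)` under the affine map, convolved with `N(0, v)`; Gaussian convolution adds variances.
-/

open MeasureTheory ProbabilityTheory

open scoped NNReal

namespace MeasureTheory.Measure

variable {α β γ : Type*} [MeasurableSpace α] [MeasurableSpace β] [MeasurableSpace γ]

theorem bind_map {μ : Measure α} {f : α → β} {g : β → Measure γ} (hf : Measurable f)
    (hg : Measurable g) : (μ.map f).bind g = μ.bind (g ∘ f) := by
  rw [bind, bind, map_map hg hf]

variable {M : Type*} [Monoid M] [MeasurableSpace M] [MeasurableMul₂ M]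

@[to_additive]
theorem measurable_map_mul_left (ν : Measure M) [SFinite ν] :
    Measurable fun x : M ↦ ν.map (x * ·) := by
  refine measurable_of_measurable_coe _ fun s hs ↦ ?_
  simp_rw [map_apply (measurable_const_mul _) hs]
  exact measurable_measure_prodMk_left (measurable_mul hs)

@[to_additive]
theorem bind_map_mul_left_eq_mconv (μ ν : Measure M) [SFinite ν] :
    μ.bind (fun x ↦ ν.map (x * ·)) = μ ∗ₘ ν := by
  ext s hs
  rw [bind_apply hs (measurable_map_mul_left ν).aemeasurable, mconv,
    map_apply measurable_mul hs, prod_apply (measurable_mul hs)]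
  simp_rw [map_apply (measurable_const_mul _) hs]
  rfl

end MeasureTheory.Measure

namespace ProbabilityTheory

lemma gaussianReal_map_affine (m a b : ℝ) (v : ℝ≥0) :
    (gaussianReal m v).map (fun x ↦ a * x + b) =
      gaussianReal (a * m + b) (.mk (a ^ 2) (sq_nonneg a) * v) := by
  rw [show (fun x ↦ a * x + b) = (· + b) ∘ (a * ·) from rfl,
    ← Measure.map_map (measurable_add_const b) (measurable_const_mul a),
    gaussianReal_map_const_mul, gaussianReal_map_add_const]

lemma gaussianReal_eq_map_const_add (m : ℝ) (v : ℝ≥0) :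
    gaussianReal m v = (gaussianReal 0 v).map (m + ·) := by
  rw [gaussianReal_map_const_add, zero_add]

end ProbabilityTheory

/-- Affine Gaussian mixture identity in measure-theoretic form: binding the Gaussian measure
`N(m, t)` with the kernel `μ ↦ N(aμ + b, v)` yields the Gaussian measure `N(am + b, v + a² t)`. -/
theorem gaussian_bind_affine (a b m : ℝ) (v t : ℝ) (hv : 0 < v) (ht : 0 < t) :
    (gaussianReal m t.toNNReal).bind
        (fun μ => gaussianReal (a * μ + b) v.toNNReal) =
      gaussianReal (a * m + b) (v + a ^ 2 * t).toNNReal := by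
  have hvar : (.mk (a ^ 2) (sq_nonneg a) : ℝ≥0) * t.toNNReal + v.toNNReal =
      (v + a ^ 2 * t).toNNReal := by
    ext
    simp only [NNReal.coe_add, NNReal.coe_mul, NNReal.coe_mk, Real.coe_toNNReal _ hv.le,
      Real.coe_toNNReal _ ht.le, Real.coe_toNNReal _ (by positivity : 0 ≤ v + a ^ 2 * t)]
    ring
  calc (gaussianReal m t.toNNReal).bind (fun μ => gaussianReal (a * μ + b) v.toNNReal)
      = (gaussianReal m t.toNNReal).bind
          ((fun c ↦ (gaussianReal 0 v.toNNReal).map (c + ·)) ∘ fun x ↦ a * x + b) := by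
        simp_rw [Function.comp_def, ← gaussianReal_eq_map_const_add]
    _ = ((gaussianReal m t.toNNReal).map fun x ↦ a * x + b).bind
          fun c ↦ (gaussianReal 0 v.toNNReal).map (c + ·) :=
        (Measure.bind_map (by fun_prop) (Measure.measurable_map_add_left _)).symm
    _ = gaussianReal (a * m + b) (v + a ^ 2 * t).toNNReal := by
        rw [Measure.bind_map_add_left_eq_conv, gaussianReal_map_affine,
          gaussianReal_conv_gaussianReal, add_zero, hvar]
end

section
/- Proposition 2, part 2 (variance bound for the hierarchical Bayesian estimator): let N_F ≥ 1, σ_β, σ_μ > 0, s_1,…,s_{N_F} > 0, β_1,…,β_{N_F} ∈ ℝ, and let ȳ_1,…,ȳ_{N_F} be independent real random variables with ȳ_j distributed as Normal(β_j, s_j²). Then for each f: Var(β̂_f) ≤ s_f²/(1 + s_f²/σ_β²)² + 2σ_β²/(1 + σ_β²/s_f²)² + (1 + σ_β²/s_f²)^{-2} Σ_{j=1}^{N_F} w_j² s_j². -/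
/-!
Writing `A = 1 + s_f²/σβ²` and `B = 1 + σβ²/s_f²`, the estimator is the linear combination
`∑ⱼ (δ_{jf}/A + w_j/B) ȳ_j`, so by independence its variance is
`s_f²/A² + 2 (s_f²/A) w_f / B + B⁻² ∑ⱼ w_j² s_j²`. Since `s_f²/A = σβ²/B` and `w_f ≤ 1`,
the cross term is at most `2σβ²/B²`.
-/

open Finset MeasureTheory ProbabilityTheory

namespace ProbabilityTheory

variable {Ω : Type*} {mΩ : MeasurableSpace Ω} {P : Measure Ω}

lemma hasLaw_of_map_eq {𝓧 : Type*} {m𝓧 : MeasurableSpace 𝓧} {X : Ω → 𝓧} {μ : Measure 𝓧}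
    [NeZero μ] (h : P.map X = μ) : HasLaw X μ P :=
  ⟨aemeasurable_of_map_neZero (h ▸ inferInstance), h⟩

lemma HasLaw.memLp {E : Type*} [NormedAddCommGroup E] [MeasurableSpace E] {X : Ω → E}
    {μ : Measure E} {p : ENNReal} (hX : HasLaw X μ P) (h : MemLp id p μ) : MemLp X p P := by
  rw [← hX.map_eq] at h
  exact h.comp_of_map hX.aemeasurable

lemma iIndepFun.variance_sum_const_mul {ι : Type*} [Fintype ι] {X : ι → Ω → ℝ}
    (hX : iIndepFun X P) (hmem : ∀ i, MemLp (X i) 2 P) (c : ι → ℝ) :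
    Var[fun ω => ∑ i, c i * X i ω; P] = ∑ i, c i ^ 2 * Var[X i; P] := by
  have hsum : (fun ω => ∑ i, c i * X i ω) = ∑ i, fun ω => c i * X i ω := by
    ext ω
    simp
  rw [hsum, IndepFun.variance_sum (fun i _ => (hmem i).const_mul (c i))
    fun i _ j _ hij => (hX.indepFun hij).comp (measurable_const_mul _) (measurable_const_mul _)]
  simp_rw [variance_const_mul]

end ProbabilityTheory

lemma sum_single_add_sq_mul {ι R : Type*} [Fintype ι] [DecidableEq ι] [CommRing R]
    (f : ι) (a : R) (c v : ι → R) :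
    ∑ j, ((Pi.single f a : ι → R) j + c j) ^ 2 * v j
      = a ^ 2 * v f + 2 * a * c f * v f + ∑ j, c j ^ 2 * v j := by
  have h : ∀ j, ((Pi.single f a : ι → R) j + c j) ^ 2 * v j
      = (Pi.single f (a ^ 2 * v f + 2 * a * c f * v f) : ι → R) j + c j ^ 2 * v j := by
    intro j
    rcases eq_or_ne j f with rfl | hj
    · simp only [Pi.single_eq_same]
      ring
    · simp [hj]
  simp_rw [h, sum_add_distrib, sum_pi_single']
  simp

lemma div_one_add_div_comm {K : Type*} [Field K] [LinearOrder K] [IsStrictOrderedRing K]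
    {a b : K} (ha : 0 < a) (hb : 0 < b) : a / (1 + a / b) = b / (1 + b / a) := by
  field_simp
  ring

lemma div_add_sum_le_one {ι K : Type*} [Fintype ι] [Field K] [LinearOrder K]
    [IsStrictOrderedRing K] {t : K} (ht : 0 ≤ t) {p : ι → K} (hp : ∀ j, 0 ≤ p j) (i : ι) :
    p i / (t + ∑ j, p j) ≤ 1 :=
  div_le_one_of_le₀ (le_add_of_nonneg_of_le ht (single_le_sum (fun j _ => hp j) (mem_univ i)))
    (add_nonneg ht (sum_nonneg fun j _ => hp j))

theorem variance_bound_hierarchical_bayes_estimator_general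
    (N : ℕ) (σβ σμ : ℝ) (hσβ : 0 < σβ)
    (s : Fin N → ℝ) (hs : ∀ j, 0 < s j) (β : Fin N → ℝ)
    (Ω : Type*) [MeasurableSpace Ω] (P : Measure Ω)
    (y : Fin N → Ω → ℝ)
    (hindep : iIndepFun y P)
    (hlaw : ∀ j, P.map (y j) = gaussianReal (β j) (((s j) ^ 2).toNNReal))
    (f : Fin N) :
    variance (fun ω => y f ω / (1 + (s f) ^ 2 / σβ ^ 2)
        + (1 / (1 + σβ ^ 2 / (s f) ^ 2)) *
          ∑ j, ((σβ ^ 2 + (s j) ^ 2)⁻¹ /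
              ((σμ ^ 2)⁻¹ + ∑ k, (σβ ^ 2 + (s k) ^ 2)⁻¹)) * y j ω) P ≤
      (s f) ^ 2 / (1 + (s f) ^ 2 / σβ ^ 2) ^ 2
        + 2 * σβ ^ 2 / (1 + σβ ^ 2 / (s f) ^ 2) ^ 2
        + ((1 + σβ ^ 2 / (s f) ^ 2) ^ 2)⁻¹ *
          ∑ j, ((σβ ^ 2 + (s j) ^ 2)⁻¹ /
              ((σμ ^ 2)⁻¹ + ∑ k, (σβ ^ 2 + (s k) ^ 2)⁻¹)) ^ 2 * (s j) ^ 2 := by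
  set w : Fin N → ℝ :=
    fun j => (σβ ^ 2 + s j ^ 2)⁻¹ / ((σμ ^ 2)⁻¹ + ∑ k, (σβ ^ 2 + s k ^ 2)⁻¹)
  set A := 1 + s f ^ 2 / σβ ^ 2
  set B := 1 + σβ ^ 2 / s f ^ 2
  have hy j : HasLaw (y j) (gaussianReal (β j) (s j ^ 2).toNNReal) P :=
    hasLaw_of_map_eq (hlaw j)
  have hvar j : Var[y j; P] = s j ^ 2 := by
    rw [(hy j).variance_eq, variance_id_gaussianReal, Real.coe_toNNReal _ (sq_nonneg _)]
  have hestimator : (fun ω => y f ω / A + 1 / B * ∑ j, w j * y j ω)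
      = fun ω => ∑ j, ((Pi.single f A⁻¹ : Fin N → ℝ) j + B⁻¹ * w j) * y j ω := by
    ext ω
    simp only [add_mul, sum_add_distrib, Pi.single_apply, ite_mul, zero_mul, sum_ite_eq',
      mem_univ, if_true, mul_sum, mul_assoc, one_div]
    ring
  have hwf : w f ≤ 1 :=
    div_add_sum_le_one (p := fun k => (σβ ^ 2 + s k ^ 2)⁻¹) (by positivity)
      (fun _ => by positivity) f
  have hcross : s f ^ 2 / A = σβ ^ 2 / B :=
    div_one_add_div_comm (pow_pos (hs f) 2) (pow_pos hσβ 2)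
  have hcross_le : 2 * (s f ^ 2 / A) / B * w f ≤ 2 * σβ ^ 2 / B ^ 2 := by
    rw [hcross]
    calc 2 * (σβ ^ 2 / B) / B * w f ≤ 2 * (σβ ^ 2 / B) / B * 1 := by gcongr
      _ = 2 * σβ ^ 2 / B ^ 2 := by field_simp
  have hvariance : Var[fun ω => ∑ j, ((Pi.single f A⁻¹ : Fin N → ℝ) j + B⁻¹ * w j) * y j ω; P]
      = s f ^ 2 / A ^ 2 + 2 * (s f ^ 2 / A) / B * w f + (B ^ 2)⁻¹ * ∑ j, w j ^ 2 * s j ^ 2 := by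
    rw [hindep.variance_sum_const_mul fun j => (hy j).memLp (memLp_id_gaussianReal 2)]
    simp_rw [hvar, sum_single_add_sq_mul, mul_sum, mul_pow, inv_pow, mul_assoc]
    ring
  rw [hestimator, hvariance]
  linarith

/-- Proposition 2, part 2: variance bound for the hierarchical Bayesian estimator `β̂_f`.
If `ȳ_1, …, ȳ_N` are independent with `ȳ_j ~ Normal(β_j, s_j²)`, then
`Var(β̂_f) ≤ s_f²/(1 + s_f²/σβ²)² + 2σβ²/(1 + σβ²/s_f²)² + (1 + σβ²/s_f²)⁻² Σ_j w_j² s_j²`. -/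
theorem variance_bound_hierarchical_bayes_estimator
    (N : ℕ) (hN : 1 ≤ N) (σβ σμ : ℝ) (hσβ : 0 < σβ) (hσμ : 0 < σμ)
    (s : Fin N → ℝ) (hs : ∀ j, 0 < s j) (β : Fin N → ℝ)
    (Ω : Type*) [MeasurableSpace Ω] (P : Measure Ω) [IsProbabilityMeasure P]
    (y : Fin N → Ω → ℝ)
    (hindep : iIndepFun y P)
    (hlaw : ∀ j, P.map (y j) = gaussianReal (β j) (((s j) ^ 2).toNNReal))
    (f : Fin N) :
    variance (fun ω => y f ω / (1 + (s f) ^ 2 / σβ ^ 2)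
        + (1 / (1 + σβ ^ 2 / (s f) ^ 2)) *
          ∑ j, ((σβ ^ 2 + (s j) ^ 2)⁻¹ /
              ((σμ ^ 2)⁻¹ + ∑ k, (σβ ^ 2 + (s k) ^ 2)⁻¹)) * y j ω) P ≤
      (s f) ^ 2 / (1 + (s f) ^ 2 / σβ ^ 2) ^ 2
        + 2 * σβ ^ 2 / (1 + σβ ^ 2 / (s f) ^ 2) ^ 2
        + ((1 + σβ ^ 2 / (s f) ^ 2) ^ 2)⁻¹ *
          ∑ j, ((σβ ^ 2 + (s j) ^ 2)⁻¹ /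
              ((σμ ^ 2)⁻¹ + ∑ k, (σβ ^ 2 + (s k) ^ 2)⁻¹)) ^ 2 * (s j) ^ 2 :=
  variance_bound_hierarchical_bayes_estimator_general N σβ σμ hσβ s hs β Ω P y hindep hlaw f
end

section
/- Bound on the off-diagonal terms in the variance estimate (equation (thm1_proof_4) in the proof of Theorem 3): let N_F ≥ 1, σ_β, σ_μ > 0, s_1,…,s_{N_F} > 0, fix f, and set h := s_f²/σ_β². If max_{j ≠ f} s_j²/σ_β² ≤ 1/h, then (1 + σ_β²/s_f²)^{-2} Σ_{j ≠ f} ((σ_β² + s_j²)^{-1} / (σ_μ^{-2} + Σ_{k=1}^{N_F}(σ_β² + s_k²)^{-1}))² s_j² ≤ s_f² / (h² (1 + 1/h)²). -/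
open Finset

/-!
Write `w_j := (σβ² + s_j²)⁻¹ / (σμ⁻² + Σ_k (σβ² + s_k²)⁻¹)`. These weights are nonnegative and
their sum over any set of indices is at most `1`, so `Σ_{j ≠ f} w_j² s_j² ≤ Σ_{j ≠ f} w_j s_j²` is
at most the bound `σβ²/h` on the `s_j²`, `j ≠ f`. Since `σβ²/s_f² = 1/h` and `σβ²/h = s_f²/h²`, the
prefactor turns `σβ²/h` into exactly `s_f² / (h² (1 + 1/h)²)`.
-/

theorem Finset.sum_div_add_sum_le_one {ι : Type*} {s t : Finset ι} (hts : t ⊆ s) {a : ι → ℝ}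
    (ha : ∀ i ∈ s, 0 ≤ a i) {c : ℝ} (hc : 0 ≤ c) :
    ∑ i ∈ t, a i / (c + ∑ i ∈ s, a i) ≤ 1 := by
  rw [← Finset.sum_div]
  have hts_sum : ∑ i ∈ t, a i ≤ ∑ i ∈ s, a i :=
    Finset.sum_le_sum_of_subset_of_nonneg hts fun i hi _ => ha i hi
  exact div_le_one_of_le₀ (by linarith) (by linarith [Finset.sum_nonneg ha])

theorem Finset.sum_sq_mul_le_of_sum_le_one {ι : Type*} {t : Finset ι} {w x : ι → ℝ} {M : ℝ}
    (hw : ∀ i ∈ t, 0 ≤ w i) (hw_sum : ∑ i ∈ t, w i ≤ 1)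
    (hx : ∀ i ∈ t, 0 ≤ x i) (hxM : ∀ i ∈ t, x i ≤ M) (hM : 0 ≤ M) :
    ∑ i ∈ t, w i ^ 2 * x i ≤ M := by
  have hw_le_one : ∀ i ∈ t, w i ≤ 1 := fun i hi =>
    (Finset.single_le_sum hw hi).trans hw_sum
  calc ∑ i ∈ t, w i ^ 2 * x i ≤ ∑ i ∈ t, w i * M := by
        refine Finset.sum_le_sum fun i hi => ?_
        calc w i ^ 2 * x i ≤ w i * x i := by
              gcongr
              · exact hx i hi
              · nlinarith [hw i hi, hw_le_one i hi]
          _ ≤ w i * M := mul_le_mul_of_nonneg_left (hxM i hi) (hw i hi)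
    _ = (∑ i ∈ t, w i) * M := (Finset.sum_mul ..).symm
    _ ≤ 1 * M := by gcongr
    _ = M := one_mul M

theorem offdiagonal_terms_bound_general
    (N : ℕ) (σβ σμ : ℝ) (hσβ : 0 < σβ)
    (s : Fin N → ℝ) (hs : ∀ j, 0 < s j) (f : Fin N)
    (h : ℝ) (hh : h = (s f) ^ 2 / σβ ^ 2)
    (hmax : ∀ j, j ≠ f → (s j) ^ 2 / σβ ^ 2 ≤ 1 / h) :
    ((1 + σβ ^ 2 / (s f) ^ 2) ^ 2)⁻¹ *
        ∑ j ∈ univ.erase f, ((σβ ^ 2 + (s j) ^ 2)⁻¹ /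
            ((σμ ^ 2)⁻¹ + ∑ k, (σβ ^ 2 + (s k) ^ 2)⁻¹)) ^ 2 * (s j) ^ 2 ≤
      (s f) ^ 2 / (h ^ 2 * (1 + 1 / h) ^ 2) := by
  have hs_f := hs f
  have h_pos : 0 < h := hh ▸ by positivity
  have hweights := Finset.sum_div_add_sum_le_one (erase_subset f univ)
    (fun k _ => (by positivity : 0 ≤ (σβ ^ 2 + (s k) ^ 2)⁻¹)) (by positivity : 0 ≤ (σμ ^ 2)⁻¹)
  have hsq_le : ∀ j ∈ univ.erase f, (s j) ^ 2 ≤ 1 / h * σβ ^ 2 := fun j hj =>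
    (div_le_iff₀ (by positivity)).mp (hmax j (ne_of_mem_erase hj))
  calc _ ≤ ((1 + σβ ^ 2 / (s f) ^ 2) ^ 2)⁻¹ * (1 / h * σβ ^ 2) := by
        gcongr
        exact Finset.sum_sq_mul_le_of_sum_le_one (fun j _ => by positivity) hweights
          (fun j _ => by positivity) hsq_le (by positivity)
    _ = (s f) ^ 2 / (h ^ 2 * (1 + 1 / h) ^ 2) := by
        subst hh
        field_simp

/-- Bound on the off-diagonal terms in the variance estimate: with `h := s_f²/σβ²`, if
`s_j²/σβ² ≤ 1/h` for all `j ≠ f`, then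
`(1 + σβ²/s_f²)⁻² Σ_{j ≠ f} ((σβ² + s_j²)⁻¹ / (σμ⁻² + Σ_k (σβ² + s_k²)⁻¹))² s_j²
  ≤ s_f² / (h² (1 + 1/h)²)`. -/
theorem offdiagonal_terms_bound
    (N : ℕ) (hN : 1 ≤ N) (σβ σμ : ℝ) (hσβ : 0 < σβ) (hσμ : 0 < σμ)
    (s : Fin N → ℝ) (hs : ∀ j, 0 < s j) (f : Fin N)
    (h : ℝ) (hh : h = (s f) ^ 2 / σβ ^ 2)
    (hmax : ∀ j, j ≠ f → (s j) ^ 2 / σβ ^ 2 ≤ 1 / h) :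
    ((1 + σβ ^ 2 / (s f) ^ 2) ^ 2)⁻¹ *
        ∑ j ∈ univ.erase f, ((σβ ^ 2 + (s j) ^ 2)⁻¹ /
            ((σμ ^ 2)⁻¹ + ∑ k, (σβ ^ 2 + (s k) ^ 2)⁻¹)) ^ 2 * (s j) ^ 2 ≤
      (s f) ^ 2 / (h ^ 2 * (1 + 1 / h) ^ 2) :=
  offdiagonal_terms_bound_general N σβ σμ hσβ s hs f h hh hmax
end
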